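/- In the graph H_m (m ≥ 4), the subgraph of G_{n,m} induced on {u₁, u₅, w₁, w₂, v₁, …, v_{m−2}}, the game total domination numbers satisfy γ_g^t(H_m) = γ_g^t'(H_m) = γ_g^t'(H_m|v) = 2 for every vertex v, while γ_g^t(H_m|v) = 1 if v ∈ {w₁, w₂} and γ_g^t(H_m|v) = 2 otherwise. -/
import Mathlib


open Finset

open scoped Classical

variable {V : Type*} [Fintype V]

/-- The set of neighbors of `v` (the vertices that `v` totally dominates). -/
noncomputable def nbr (G : SimpleGraph V) (v : V) : Finset V :=
  Finset.univ.filter (G.Adj v)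

/-- The legal moves, given that the vertices of `D` are already totally dominated:
a vertex is playable iff it totally dominates at least one vertex outside `D`. -/
noncomputable def movesF (G : SimpleGraph V) (D : Finset V) : Finset V :=
  Finset.univ.filter fun v => ¬ nbr G v ⊆ D

lemma movesF_card (G : SimpleGraph V) (D : Finset V) {v : V} (hv : v ∈ movesF G D) :
    ((univ : Finset V) \ (D ∪ nbr G v)).card < ((univ : Finset V) \ D).card := by
  simp only [movesF, mem_filter] at hv
  obtain ⟨u, hu, hu2⟩ := Finset.not_subset.mp hv.2
  apply Finset.card_lt_card
  constructor
  · exact Finset.sdiff_subset_sdiff le_rfl Finset.subset_union_left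
  · intro hsub
    have h1 : u ∈ (univ : Finset V) \ D := by simp [hu2]
    have h2 := hsub h1
    simp only [mem_sdiff, mem_univ, true_and, Finset.mem_union] at h2
    exact h2 (Or.inr hu)

/-- Optimal number of moves in the total domination game on `G` with the vertices of `D`
already totally dominated; `turn = true` means Dominator (the minimizer) moves next,
`turn = false` means Staller (the maximizer) moves next.  The game ends when no legal
move remains (for graphs without isolated vertices this means every vertex is totally
dominated). -/
noncomputable def gtVal (G : SimpleGraph V) (turn : Bool) (D : Finset V) : ℕ :=
  if h : (movesF G D).Nonempty then
    if turn then
      1 + ((movesF G D).attach.inf' (by simpa using h)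
        fun v => gtVal G false (D ∪ nbr G v.1))
    else
      1 + ((movesF G D).attach.sup' (by simpa using h)
        fun v => gtVal G true (D ∪ nbr G v.1))
  else 0
termination_by ((univ : Finset V) \ D).card
decreasing_by
  · exact movesF_card G D v.2
  · exact movesF_card G D v.2

/-- The game total domination number `γ_g^t(G|D)` (Dominator-start, `D` predominated). -/
noncomputable def gtD (G : SimpleGraph V) (D : Finset V := ∅) : ℕ := gtVal G true D

/-- The Staller-start game total domination number `γ_g^t'(G|D)`. -/
noncomputable def gtS (G : SimpleGraph V) (D : Finset V := ∅) : ℕ := gtVal G false D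

/-- `G` has no isolated vertices. -/
def NoIsolated (G : SimpleGraph V) : Prop := ∀ v : V, ∃ w, G.Adj v w

/-- The graph `H_m` on vertex set `{u₁, u₅, w₁, w₂, v₁, …, v_{m-2}}` (here `u₁ = 0`,
`u₅ = 1`, `w₁ = 2`, `w₂ = 3`, `vᵢ = 3 + i`): the vertices `w₁, w₂, v₁, …, v_{m-2}`
induce a complete graph `K_m`, and `u₁`, `u₅` are each adjacent exactly to `w₁` and
`w₂` (and `u₁`, `u₅` are nonadjacent). -/
def Hm (m : ℕ) : SimpleGraph (Fin (m + 2)) :=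
  SimpleGraph.fromRel (fun a b =>
    (2 ≤ (a : ℕ) ∧ 2 ≤ (b : ℕ)) ∨ ((a : ℕ) ≤ 1 ∧ ((b : ℕ) = 2 ∨ (b : ℕ) = 3)))

-- generic lemmas
lemma gtVal_univ (G : SimpleGraph V) (t : Bool) : gtVal G t (univ : Finset V) = 0 := by
  rw [gtVal]
  have : ¬ (movesF G univ).Nonempty := by
    simp [movesF, Finset.filter_eq_empty_iff, Finset.not_nonempty_iff_eq_empty]
  simp [this]

lemma gtVal_one_le (G : SimpleGraph V) (t : Bool) {D : Finset V}
    (h : (movesF G D).Nonempty) : 1 ≤ gtVal G t D := by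
  rw [gtVal, dif_pos h]
  cases t <;> simp only [if_true, Bool.false_eq_true, if_false] <;> exact Nat.le_add_right 1 _

lemma gtVal_true_le (G : SimpleGraph V) {D : Finset V} {x : V} (hx : x ∈ movesF G D) :
    gtVal G true D ≤ 1 + gtVal G false (D ∪ nbr G x) := by
  have h : (movesF G D).Nonempty := ⟨x, hx⟩
  rw [gtVal, dif_pos h, if_pos rfl]
  exact Nat.add_le_add_left (Finset.inf'_le (fun v : {y // y ∈ movesF G D} => gtVal G false (D ∪ nbr G v.1)) (Finset.mem_attach _ ⟨x, hx⟩)) 1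

lemma gtVal_false_ge (G : SimpleGraph V) {D : Finset V} {x : V} (hx : x ∈ movesF G D) :
    1 + gtVal G true (D ∪ nbr G x) ≤ gtVal G false D := by
  have h : (movesF G D).Nonempty := ⟨x, hx⟩
  conv_rhs => rw [gtVal]
  rw [dif_pos h]
  simp only [Bool.false_eq_true, if_false]
  exact Nat.add_le_add_left (Finset.le_sup' (fun v : {y // y ∈ movesF G D} => gtVal G true (D ∪ nbr G v.1)) (Finset.mem_attach _ ⟨x, hx⟩)) 1

lemma gtVal_true_ge (G : SimpleGraph V) {D : Finset V} {c : ℕ}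
    (h : (movesF G D).Nonempty)
    (hc : ∀ x ∈ movesF G D, c ≤ gtVal G false (D ∪ nbr G x)) :
    1 + c ≤ gtVal G true D := by
  rw [gtVal, dif_pos h, if_pos rfl]
  exact Nat.add_le_add_left (Finset.le_inf' _ _ fun v _ => hc v.1 v.2) 1

lemma gtVal_false_le (G : SimpleGraph V) {D : Finset V} {c : ℕ}
    (hc : ∀ x ∈ movesF G D, gtVal G true (D ∪ nbr G x) ≤ c) :
    gtVal G false D ≤ 1 + c := by
  rw [gtVal]
  by_cases h : (movesF G D).Nonempty
  · rw [dif_pos h]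
    simp only [Bool.false_eq_true, if_false]
    exact Nat.add_le_add_left (Finset.sup'_le _ _ fun v _ => hc v.1 v.2) 1
  · rw [dif_neg h]; omega

lemma mem_nbr {G : SimpleGraph V} {u v : V} : u ∈ nbr G v ↔ G.Adj v u := by
  simp [nbr]

lemma not_mem_nbr_self (G : SimpleGraph V) (v : V) : v ∉ nbr G v := by
  simp [nbr]

-- union lemmas stated with the same `DecidableEq` instance used in the lemmas above
lemma mem_union_left' {D E : Finset V} {a : V} (h : a ∈ D) : a ∈ D ∪ E :=
  Finset.mem_union_left _ h

lemma mem_union_right' {D E : Finset V} {a : V} (h : a ∈ E) : a ∈ D ∪ E :=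
  Finset.mem_union_right _ h

lemma mem_union_elim' {D E : Finset V} {a : V} (h : a ∈ D ∪ E) : a ∈ D ∨ a ∈ E :=
  Finset.mem_union.mp h


lemma Hm_adj {m : ℕ} {a b : Fin (m + 2)} :
    (Hm m).Adj a b ↔ a ≠ b ∧ ((2 ≤ (a : ℕ) ∧ 2 ≤ (b : ℕ)) ∨
      ((a : ℕ) ≤ 1 ∧ ((b : ℕ) = 2 ∨ (b : ℕ) = 3)) ∨
      ((b : ℕ) ≤ 1 ∧ ((a : ℕ) = 2 ∨ (a : ℕ) = 3))) := by
  simp only [Hm, SimpleGraph.fromRel_adj]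
  tauto

-- every vertex ≠ u with u.val ∈ {2,3} is adjacent to u
lemma adj_to_w {m : ℕ} {u v : Fin (m + 2)} (hu : (u : ℕ) = 2 ∨ (u : ℕ) = 3)
    (hvu : v ≠ u) : (Hm m).Adj v u := by
  rw [Hm_adj]
  refine ⟨hvu, ?_⟩
  rcases Nat.lt_or_ge (v : ℕ) 2 with h | h
  · exact Or.inr (Or.inl ⟨by omega, hu⟩)
  · exact Or.inl ⟨h, by omega⟩

lemma nbr_w {m : ℕ} {u : Fin (m + 2)} (hu : (u : ℕ) = 2 ∨ (u : ℕ) = 3) :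
    nbr (Hm m) u = univ.erase u := by
  ext x
  simp only [mem_nbr, mem_erase, mem_univ, and_true]
  constructor
  · exact fun h => h.ne'
  · exact fun h => ((adj_to_w hu h)).symm

lemma mem_movesF_iff {G : SimpleGraph V} {D : Finset V} {x : V} :
    x ∈ movesF G D ↔ ¬ nbr G x ⊆ D := by simp [movesF]

lemma gtVal_zero (G : SimpleGraph V) (t : Bool) {D : Finset V}
    (h : ∀ v, nbr G v ⊆ D) : gtVal G t D = 0 := by
  rw [gtVal]
  have : ¬ (movesF G D).Nonempty := by
    simp only [Finset.not_nonempty_iff_eq_empty, movesF, Finset.filter_eq_empty_iff]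
    intro v _
    simp [h v]
  simp [this]

section HmLemmas
variable {m : ℕ}

lemma fin_ne {n : ℕ} {a b : Fin n} (h : (a : ℕ) ≠ (b : ℕ)) : a ≠ b :=
  fun e => h (congrArg Fin.val e)

lemma mem_nbr_w {u x : Fin (m + 2)} (hu : (u : ℕ) = 2 ∨ (u : ℕ) = 3) :
    x ∈ nbr (Hm m) u ↔ x ≠ u := by
  rw [mem_nbr]
  constructor
  · exact fun h => h.ne'
  · exact fun h => (adj_to_w hu h).symm

lemma w_playable (hm : 4 ≤ m) {u : Fin (m + 2)} (hu : (u : ℕ) = 2 ∨ (u : ℕ) = 3)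
    {D : Finset (Fin (m + 2))} (hD : ∃ v, v ∉ D ∧ v ≠ u) : u ∈ movesF (Hm m) D := by
  rw [mem_movesF_iff]
  intro hsub
  obtain ⟨v, hv, hvu⟩ := hD
  exact hv (hsub ((mem_nbr_w hu).mpr hvu))

lemma movesF_nonempty (hm : 4 ≤ m) {D : Finset (Fin (m + 2))} (hD : ∃ v, v ∉ D) :
    (movesF (Hm m) D).Nonempty := by
  obtain ⟨v, hv⟩ := hD
  by_cases h2 : v = ⟨2, by omega⟩
  · exact ⟨⟨3, by omega⟩, w_playable hm (Or.inr rfl) ⟨v, hv, by subst h2; exact Fin.ne_of_val_ne (by norm_num)⟩⟩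
  · exact ⟨⟨2, by omega⟩, w_playable hm (Or.inl rfl) ⟨v, hv, h2⟩⟩

/-- Dominator can finish in one move whenever some predominated vertex is `w₁` or `w₂`. -/
lemma dom_le_one (hm : 4 ≤ m) {u : Fin (m + 2)} (hu : (u : ℕ) = 2 ∨ (u : ℕ) = 3)
    {D : Finset (Fin (m + 2))} (huD : u ∈ D) : gtVal (Hm m) true D ≤ 1 := by
  by_cases hall : ∀ v, v ∈ D
  · rw [gtVal_zero _ _ (fun v x _ => hall x)]; omega
  · push_neg at hall
    obtain ⟨v, hv⟩ := hall
    have hplay : u ∈ movesF (Hm m) D :=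
      w_playable hm hu ⟨v, hv, fun h => hv (h ▸ huD)⟩
    refine le_trans (gtVal_true_le (Hm m) hplay) ?_
    rw [gtVal_zero]
    · intro w x hx
      rcases eq_or_ne x u with rfl | hne
      · exact mem_union_left' huD
      · exact mem_union_right' ((mem_nbr_w hu).mpr hne)

lemma dom_eq_one (hm : 4 ≤ m) {u : Fin (m + 2)} (hu : (u : ℕ) = 2 ∨ (u : ℕ) = 3)
    {D : Finset (Fin (m + 2))} (huD : u ∈ D) (hD : ∃ v, v ∉ D) :
    gtVal (Hm m) true D = 1 :=
  le_antisymm (dom_le_one hm hu huD) (gtVal_one_le _ _ (movesF_nonempty hm hD))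

lemma staller_le_two (hm : 4 ≤ m) (D : Finset (Fin (m + 2))) :
    gtVal (Hm m) false D ≤ 2 := by
  have : gtVal (Hm m) false D ≤ 1 + 1 := by
    apply gtVal_false_le
    intro x hx
    by_cases hx2 : (x : ℕ) = 2
    · exact dom_le_one hm (u := ⟨3, by omega⟩) (Or.inr rfl) (mem_union_right'
        (mem_nbr.mpr (adj_to_w (Or.inr rfl) (fin_ne (show (x:ℕ) ≠ 3 by omega)))))
    · exact dom_le_one hm (u := ⟨2, by omega⟩) (Or.inl rfl) (mem_union_right'
        (mem_nbr.mpr (adj_to_w (Or.inl rfl) (fin_ne hx2))))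
  omega

/-- If exactly the vertices other than some `u ∈ {w₁, w₂}` are dominated, the
Staller-start value is `1`. -/
lemma staller_punct (hm : 4 ≤ m) {u : Fin (m + 2)} (hu : (u : ℕ) = 2 ∨ (u : ℕ) = 3)
    {D : Finset (Fin (m + 2))} (hD : ∀ x, x ∈ D ↔ x ≠ u) :
    gtVal (Hm m) false D = 1 := by
  have hup : gtVal (Hm m) false D ≤ 1 + 0 := by
    apply gtVal_false_le
    intro x hx
    have hxu : x ≠ u := by
      intro h; subst h
      exact mem_movesF_iff.mp hx (fun y hy => (hD y).mpr ((mem_nbr_w hu).mp hy))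
    rw [gtVal_zero]
    intro w y hy
    rcases eq_or_ne y u with rfl | hne
    · exact mem_union_right' (mem_nbr.mpr (adj_to_w hu hxu))
    · exact mem_union_left' ((hD y).mpr hne)
  have hlo : 1 ≤ gtVal (Hm m) false D :=
    gtVal_one_le _ _ (movesF_nonempty hm ⟨u, fun h => ((hD u).mp h) rfl⟩)
  omega

end HmLemmas

section Main
variable {m : ℕ}

lemma part1 (hm : 4 ≤ m) : gtVal (Hm m) true (∅ : Finset (Fin (m + 2))) = 2 := by
  have hw1 : ((⟨2, by omega⟩ : Fin (m + 2)) : ℕ) = 2 ∨ ((⟨2, by omega⟩ : Fin (m + 2)) : ℕ) = 3 :=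
    Or.inl rfl
  have hplay : (⟨2, by omega⟩ : Fin (m + 2)) ∈ movesF (Hm m) ∅ :=
    w_playable hm hw1 ⟨⟨3, by omega⟩, Finset.notMem_empty _, Fin.ne_of_val_ne (by norm_num)⟩
  have hup := gtVal_true_le (Hm m) hplay
  rw [staller_punct hm hw1 ?hchar] at hup
  case hchar =>
    intro x
    constructor
    · intro hx
      rcases mem_union_elim' hx with h | h
      · exact absurd h (Finset.notMem_empty x)
      · exact (mem_nbr_w hw1).mp h
    · intro hx
      exact mem_union_right' ((mem_nbr_w hw1).mpr hx)
  have hlo : 1 + 1 ≤ gtVal (Hm m) true (∅ : Finset (Fin (m + 2))) := by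
    apply gtVal_true_ge
    · exact movesF_nonempty hm ⟨⟨2, by omega⟩, Finset.notMem_empty _⟩
    · intro x hx
      apply gtVal_one_le
      apply movesF_nonempty hm
      refine ⟨x, fun hmem => ?_⟩
      rcases mem_union_elim' hmem with h | h
      · exact Finset.notMem_empty x h
      · exact not_mem_nbr_self (Hm m) x h
  omega

lemma part2 (hm : 4 ≤ m) : gtVal (Hm m) false (∅ : Finset (Fin (m + 2))) = 2 := by
  have hup := staller_le_two hm (∅ : Finset (Fin (m + 2)))
  have hw1 : ((⟨2, by omega⟩ : Fin (m + 2)) : ℕ) = 2 ∨ ((⟨2, by omega⟩ : Fin (m + 2)) : ℕ) = 3 :=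
    Or.inl rfl
  have hplay : (⟨2, by omega⟩ : Fin (m + 2)) ∈ movesF (Hm m) ∅ :=
    w_playable hm hw1 ⟨⟨3, by omega⟩, Finset.notMem_empty _, Fin.ne_of_val_ne (by norm_num)⟩
  have hlo := gtVal_false_ge (Hm m) hplay
  rw [dom_eq_one hm (u := ⟨3, by omega⟩) (Or.inr rfl) ?h1 ?h2] at hlo
  case h1 => exact mem_union_right' ((mem_nbr_w hw1).mpr (Fin.ne_of_val_ne (by norm_num)))
  case h2 =>
    refine ⟨⟨2, by omega⟩, fun h => ?_⟩
    rcases mem_union_elim' h with h | h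
    · exact Finset.notMem_empty _ h
    · exact not_mem_nbr_self (Hm m) _ h
  omega

lemma part3 (hm : 4 ≤ m) (v : Fin (m + 2)) : gtVal (Hm m) false ({v} : Finset (Fin (m + 2))) = 2 := by
  rcases eq_or_ne v ⟨2, by omega⟩ with rfl | hne
  · -- v = w1, Staller plays w2
    have hup := staller_le_two hm ({(⟨2, by omega⟩ : Fin (m + 2))} : Finset (Fin (m + 2)))
    have hplay : (⟨3, by omega⟩ : Fin (m + 2)) ∈ movesF (Hm m) {(⟨2, by omega⟩ : Fin (m + 2))} :=
      w_playable hm (Or.inr rfl) ⟨⟨0, by omega⟩,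
        Finset.notMem_singleton.mpr (Fin.ne_of_val_ne (by norm_num)),
        Fin.ne_of_val_ne (by norm_num)⟩
    have hlo := gtVal_false_ge (Hm m) hplay
    rw [dom_eq_one hm (u := ⟨2, by omega⟩) (Or.inl rfl) ?h1 ?h2] at hlo
    case h1 => exact mem_union_left' (Finset.mem_singleton_self _)
    case h2 =>
      refine ⟨⟨3, by omega⟩, fun h => ?_⟩
      rcases mem_union_elim' h with h | h
      · exact absurd (Finset.mem_singleton.mp h) (Fin.ne_of_val_ne (by norm_num))
      · exact not_mem_nbr_self (Hm m) _ h
    omega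
  · -- v ≠ w1, Staller plays w1
    have hup := staller_le_two hm ({v} : Finset (Fin (m + 2)))
    have hwit : ∃ u : Fin (m + 2), u ∉ ({v} : Finset (Fin (m + 2))) ∧ u ≠ ⟨2, by omega⟩ := by
      rcases eq_or_ne v ⟨0, by omega⟩ with h0 | h0
      · refine ⟨⟨1, by omega⟩, Finset.notMem_singleton.mpr ?_, Fin.ne_of_val_ne (by norm_num)⟩
        rw [h0]
        exact Fin.ne_of_val_ne (by norm_num)
      · exact ⟨⟨0, by omega⟩, Finset.notMem_singleton.mpr h0.symm,
          Fin.ne_of_val_ne (by norm_num)⟩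
    have hplay : (⟨2, by omega⟩ : Fin (m + 2)) ∈ movesF (Hm m) {v} :=
      w_playable hm (Or.inl rfl) hwit
    have hlo := gtVal_false_ge (Hm m) hplay
    rw [dom_eq_one hm (u := ⟨3, by omega⟩) (Or.inr rfl) ?h1 ?h2] at hlo
    case h1 => exact mem_union_right' ((mem_nbr_w (Or.inl rfl)).mpr (Fin.ne_of_val_ne (by norm_num)))
    case h2 =>
      refine ⟨⟨2, by omega⟩, fun h => ?_⟩
      rcases mem_union_elim' h with h | h
      · exact hne (Finset.mem_singleton.mp h).symm
      · exact not_mem_nbr_self (Hm m) _ h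
    omega

lemma part4 (hm : 4 ≤ m) (v : Fin (m + 2)) :
    gtVal (Hm m) true ({v} : Finset (Fin (m + 2))) =
      if (v : ℕ) = 2 ∨ (v : ℕ) = 3 then 1 else 2 := by
  by_cases hv : (v : ℕ) = 2 ∨ (v : ℕ) = 3
  · rw [if_pos hv]
    exact dom_eq_one hm hv (Finset.mem_singleton_self v)
      ⟨⟨0, by omega⟩, Finset.notMem_singleton.mpr (Fin.ne_of_val_ne (show (0:ℕ) ≠ (v:ℕ) by omega))⟩
  · rw [if_neg hv]
    push_neg at hv
    obtain ⟨hv2, hv3⟩ := hv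
    -- upper bound: Dominator plays w1
    have hplay : (⟨2, by omega⟩ : Fin (m + 2)) ∈ movesF (Hm m) {v} :=
      w_playable hm (Or.inl rfl) ⟨⟨3, by omega⟩,
        Finset.notMem_singleton.mpr (Fin.ne_of_val_ne (show (3:ℕ) ≠ (v:ℕ) by omega)),
        Fin.ne_of_val_ne (by norm_num)⟩
    have hup := gtVal_true_le (Hm m) hplay
    rw [staller_punct hm (u := ⟨2, by omega⟩) (Or.inl rfl) ?hchar] at hup
    case hchar =>
      intro x
      constructor
      · intro hx
        rcases mem_union_elim' hx with h | h
        · rw [Finset.mem_singleton.mp h]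
          exact Fin.ne_of_val_ne (show (v:ℕ) ≠ 2 from hv2)
        · exact (mem_nbr_w (Or.inl rfl)).mp h
      · intro hx
        exact mem_union_right' ((mem_nbr_w (Or.inl rfl)).mpr hx)
    -- lower bound
    have hlo : 1 + 1 ≤ gtVal (Hm m) true ({v} : Finset (Fin (m + 2))) := by
      apply gtVal_true_ge
      · exact movesF_nonempty hm ⟨⟨2, by omega⟩,
          Finset.notMem_singleton.mpr (Fin.ne_of_val_ne (show (2:ℕ) ≠ (v:ℕ) by omega))⟩
      · intro x hx
        apply gtVal_one_le
        apply movesF_nonempty hm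
        rcases eq_or_ne x v with rfl | hxv
        · -- x = v : v is not adjacent to everything
          rcases Nat.lt_or_ge (x : ℕ) 2 with hlt | hge
          · refine ⟨⟨4, by omega⟩, fun h => ?_⟩
            rcases mem_union_elim' h with h | h
            · have := congrArg Fin.val (Finset.mem_singleton.mp h)
              simp at this
              omega
            · rw [mem_nbr, Hm_adj] at h
              obtain ⟨-, h⟩ := h
              have h4 : ((⟨4, by omega⟩ : Fin (m + 2)) : ℕ) = 4 := rfl
              omega
          · have hge4 : 4 ≤ (x : ℕ) := by omega
            refine ⟨⟨0, by omega⟩, fun h => ?_⟩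
            rcases mem_union_elim' h with h | h
            · have := congrArg Fin.val (Finset.mem_singleton.mp h)
              simp at this
              omega
            · rw [mem_nbr, Hm_adj] at h
              obtain ⟨-, h⟩ := h
              have h0 : ((⟨0, by omega⟩ : Fin (m + 2)) : ℕ) = 0 := rfl
              omega
        · refine ⟨x, fun h => ?_⟩
          rcases mem_union_elim' h with h | h
          · exact hxv (Finset.mem_singleton.mp h)
          · exact not_mem_nbr_self (Hm m) x h
    omega

end Main

/-- For `m ≥ 4`:
`γ_g^t(H_m) = γ_g^t'(H_m) = γ_g^t'(H_m|v) = 2` for every vertex `v`, while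
`γ_g^t(H_m|v) = 1` if `v ∈ {w₁, w₂}` and `γ_g^t(H_m|v) = 2` otherwise. -/
theorem gt_Hm (m : ℕ) (hm : 4 ≤ m) :
    gtD (Hm m) = 2 ∧ gtS (Hm m) = 2 ∧
    (∀ v : Fin (m + 2), gtS (Hm m) {v} = 2) ∧
    (∀ v : Fin (m + 2),
      gtD (Hm m) {v} = if (v : ℕ) = 2 ∨ (v : ℕ) = 3 then 1 else 2) := by
  exact ⟨part1 hm, part2 hm, part3 hm, part4 hm⟩
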